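/- The set of all ratios o(H)/o(G), where G ranges over all finite abelian groups and H ranges over all subgroups of G, is dense in the interval [0, 1]. That is, for every real number a with 0 ≤ a ≤ 1 and every ε > 0, there exist a finite abelian group G and a subgroup H of G such that |o(H)/o(G) - a| < ε. -/

import Mathlib

/-!
In `C_p × C_p` every non-identity element has order `p`, so its average order is
`(p³ - p + 1)/p²`, while its subgroup `C_p × 1` has average order `(p² - p + 1)/p`. Their ratio
`r_p` satisfies `1 - 1/p ≤ r_p ≤ 1` and `1 - r_p ≥ 1/(4p)`. Average order is multiplicative on
direct products of groups of coprime orders, so every finite product of the `r_p` over distinct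
primes is a ratio `o(H)/o(G)`. Since `r_p → 1` while `∑ (1 - r_p)` diverges along with `∑ 1/p`,
the partial products of the `r_p` beyond a large enough prime decrease to `0` in steps smaller
than `ε`, hence one of them lands within `ε` of `a`.
-/

open Filter Topology

/-- The average order of the elements of a finite group `G`:
`o(G) = (1/|G|) * ∑_{x ∈ G} |x|`. -/
noncomputable def avgOrder (G : Type*) [Group G] : ℝ :=
  (∑ᶠ x : G, (orderOf x : ℝ)) / (Nat.card G)

open Finset

theorem exists_apply_mem_Ico_of_sub_le {α : Type*} [AddCommGroup α] [LinearOrder α]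
    [IsOrderedAddMonoid α] {P : ℕ → α} {a ε : α} (h0 : a ≤ P 0)
    (hstep : ∀ k, P k - ε ≤ P (k + 1)) (hlt : ∃ k, P k < a + ε) :
    ∃ k, P k ∈ Set.Ico a (a + ε) := by
  by_contra! h
  simp only [Set.mem_Ico, not_and, not_lt] at h
  obtain ⟨k, hk⟩ := hlt
  have hge : ∀ k, a + ε ≤ P k := by
    intro k
    induction k with
    | zero => exact h 0 h0
    | succ k ih => exact h _ ((le_sub_iff_add_le.2 ih).trans (hstep k))
  exact (hge k).not_gt hk

theorem tendsto_prod_range_zero_of_not_summable_one_sub {r : ℕ → ℝ} (h0 : ∀ j, 0 ≤ r j)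
    (h1 : ∀ j, r j ≤ 1) (hr : ¬Summable fun j => 1 - r j) :
    Tendsto (fun k => ∏ j ∈ range k, r j) atTop (𝓝 0) := by
  have hsum : Tendsto (fun k => ∑ j ∈ range k, (1 - r j)) atTop atTop :=
    (not_summable_iff_tendsto_nat_atTop_of_nonneg fun j => sub_nonneg.2 (h1 j)).1 hr
  refine squeeze_zero (fun k => prod_nonneg fun j _ => h0 j) (fun k => ?_)
    (Real.tendsto_exp_neg_atTop_nhds_zero.comp hsum)
  calc ∏ j ∈ range k, r j ≤ ∏ j ∈ range k, Real.exp (-(1 - r j)) :=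
        prod_le_prod (fun j _ => h0 j) fun j _ => by linarith [Real.add_one_le_exp (-(1 - r j))]
    _ = Real.exp (-∑ j ∈ range k, (1 - r j)) := by rw [← sum_neg_distrib, Real.exp_sum]

theorem exists_finset_abs_prod_sub_lt {r : ℕ → ℝ} (h0 : ∀ j, 0 ≤ r j) (h1 : ∀ j, r j ≤ 1)
    (hlim : Tendsto r atTop (𝓝 1)) (hdiv : ¬Summable fun j => 1 - r j) {a ε : ℝ}
    (ha0 : 0 ≤ a) (ha1 : a ≤ 1) (hε : 0 < ε) :
    ∃ S : Finset ℕ, |∏ j ∈ S, r j - a| < ε := by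
  obtain ⟨N, hN⟩ := eventually_atTop.1 (hlim.eventually (Ioi_mem_nhds (sub_lt_self 1 hε)))
  set P : ℕ → ℝ := fun k => ∏ j ∈ range k, r (j + N)
  have hP0 : ∀ k, 0 ≤ P k := fun k => prod_nonneg fun j _ => h0 _
  have hP1 : ∀ k, P k ≤ 1 := fun k => prod_le_one (fun j _ => h0 _) fun j _ => h1 _
  have hstep : ∀ k, P k - ε ≤ P (k + 1) := fun k => by
    have : 1 - ε < r (k + N) := hN _ (Nat.le_add_left N k)
    simp only [P, prod_range_succ]
    nlinarith [hP0 k, hP1 k]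
  have hlt : ∃ k, P k < a + ε :=
    ((tendsto_prod_range_zero_of_not_summable_one_sub (fun j => h0 _) (fun j => h1 _)
      ((summable_nat_add_iff (f := fun j => 1 - r j) N).not.2 hdiv)).eventually
        (gt_mem_nhds (by linarith))).exists
  obtain ⟨k, hk⟩ := exists_apply_mem_Ico_of_sub_le (by simpa [P] using ha1) hstep hlt
  refine ⟨(range k).map (addRightEmbedding N), ?_⟩
  rw [prod_map, abs_sub_lt_iff]
  change P k - a < ε ∧ a - P k < ε
  exact ⟨by linarith [hk.2], by linarith [hk.1]⟩

theorem avgOrder_congr {G H : Type*} [Group G] [Group H] (e : G ≃* H) :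
    avgOrder G = avgOrder H := by
  rw [avgOrder, avgOrder, Nat.card_congr e.toEquiv,
    finsum_eq_of_bijective (g := fun y : H => (orderOf y : ℝ)) e e.bijective fun x => by
      rw [MulEquiv.orderOf_eq]]

theorem avgOrder_prod_of_coprime {A B : Type*} [Group A] [Group B] [Finite A] [Finite B]
    (h : (Nat.card A).Coprime (Nat.card B)) :
    avgOrder (A × B) = avgOrder A * avgOrder B := by
  cases nonempty_fintype A
  cases nonempty_fintype B
  have horder : ∀ x : A × B, (orderOf x : ℝ) = orderOf x.1 * orderOf x.2 := fun x => by
    rw [Prod.orderOf, ((h.coprime_dvd_left (orderOf_dvd_natCard x.1)).coprime_dvd_right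
      (orderOf_dvd_natCard x.2)).lcm_eq_mul, Nat.cast_mul]
  simp only [avgOrder, finsum_eq_sum_of_fintype, horder, Fintype.sum_prod_type, ← sum_mul_sum,
    Nat.card_prod, Nat.cast_mul, div_mul_div_comm]

theorem avgOrder_subgroupProd_div {A B : Type*} [Group A] [Group B] [Finite A] [Finite B]
    (h : (Nat.card A).Coprime (Nat.card B)) (K : Subgroup A) (L : Subgroup B) :
    avgOrder (K.prod L) / avgOrder (A × B) =
      avgOrder K / avgOrder A * (avgOrder L / avgOrder B) := by
  rw [avgOrder_congr (K.prodEquiv L), avgOrder_prod_of_coprime h, avgOrder_prod_of_coprime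
    ((h.coprime_dvd_left K.card_subgroup_dvd_card).coprime_dvd_right L.card_subgroup_dvd_card),
    mul_div_mul_comm]

theorem avgOrder_of_forall_pow_eq_one {G : Type*} [Group G] [Finite G] {p : ℕ} (hp : p.Prime)
    (h : ∀ x : G, x ^ p = 1) : avgOrder G = (p * (Nat.card G - 1) + 1) / Nat.card G := by
  classical
  have := Fact.mk hp
  cases nonempty_fintype G
  have horder : ∀ x ∈ ({1}ᶜ : Finset G), (orderOf x : ℝ) = p := fun x hx => by
    rw [orderOf_eq_prime (h x) (by simpa using hx)]
  rw [avgOrder, finsum_eq_sum_of_fintype, Fintype.sum_eq_add_sum_compl 1, sum_congr rfl horder,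
    sum_const, card_compl, card_singleton, Nat.card_eq_fintype_card, nsmul_eq_mul,
    Nat.cast_sub Fintype.card_pos, orderOf_one, Nat.cast_one]
  ring

noncomputable def avgOrderRatio (p : ℕ) : ℝ := p * (p ^ 2 - p + 1) / (p ^ 3 - p + 1)

theorem avgOrder_prod_top_bot_div {p : ℕ} (hp : p.Prime) :
    avgOrder ((⊤ : Subgroup (Multiplicative (ZMod p))).prod
        (⊥ : Subgroup (Multiplicative (ZMod p)))) /
      avgOrder (Multiplicative (ZMod p) × Multiplicative (ZMod p)) = avgOrderRatio p := by
  have := NeZero.of_pos hp.pos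
  have hpow : ∀ x : Multiplicative (ZMod p) × Multiplicative (ZMod p), x ^ p = 1 := fun x => by
    ext <;> simp
  rw [avgOrder_of_forall_pow_eq_one hp fun x => Subtype.ext (hpow x),
    avgOrder_of_forall_pow_eq_one hp hpow, Nat.card_congr (Subgroup.prodEquiv _ _).toEquiv,
    Nat.card_prod, Nat.card_prod, Subgroup.card_top, Subgroup.card_bot]
  simp only [Nat.card_congr Multiplicative.toAdd, Nat.card_zmod]
  have hp1 : (1 : ℝ) ≤ p := by exact_mod_cast hp.one_lt.le
  have hden : (p : ℝ) * (p ^ 2 - 1) + 1 ≠ 0 := by nlinarith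
  rw [avgOrderRatio]
  push_cast
  field_simp

theorem exists_subgroup_avgOrder_div_eq_prod (S : Finset ℕ) (hS : ∀ p ∈ S, p.Prime) :
    ∃ (G : Type) (_ : CommGroup G) (_ : Finite G) (H : Subgroup G),
      Nat.card G = ∏ p ∈ S, p ^ 2 ∧ avgOrder H / avgOrder G = ∏ p ∈ S, avgOrderRatio p := by
  induction S using Finset.induction_on with
  | empty =>
    have hunit : avgOrder Unit = 1 := by
      simp [avgOrder, finsum_eq_sum_of_fintype, orderOf_eq_one_iff.2 (Subsingleton.elim _ _)]
    exact ⟨Unit, _, inferInstance, ⊤, by simp, by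
      rw [avgOrder_congr Subgroup.topEquiv, hunit, div_one, prod_empty]⟩
  | insert p S hpS ih =>
    obtain ⟨G, _, _, H, hcard, hratio⟩ := ih fun q hq => hS q (mem_insert_of_mem hq)
    have hp := hS p (mem_insert_self p S)
    have := NeZero.of_pos hp.pos
    have hcardp : Nat.card (Multiplicative (ZMod p) × Multiplicative (ZMod p)) = p ^ 2 := by
      rw [Nat.card_prod, Nat.card_congr Multiplicative.toAdd, Nat.card_zmod, sq]
    have hcop : (Nat.card (Multiplicative (ZMod p) × Multiplicative (ZMod p))).Coprime
        (Nat.card G) := by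
      rw [hcardp, hcard]
      refine Nat.Coprime.pow_left 2 (Nat.Coprime.prod_right fun q hq => ?_)
      exact ((Nat.coprime_primes hp (hS q (mem_insert_of_mem hq))).2
        (ne_of_mem_of_not_mem hq hpS).symm).pow_right 2
    refine ⟨(Multiplicative (ZMod p) × Multiplicative (ZMod p)) × G, inferInstance, inferInstance,
      ((⊤ : Subgroup (Multiplicative (ZMod p))).prod ⊥).prod H, ?_, ?_⟩
    · rw [Nat.card_prod, hcardp, hcard, prod_insert hpS]
    · rw [avgOrder_subgroupProd_div hcop, avgOrder_prod_top_bot_div hp, hratio, prod_insert hpS]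

theorem natCast_cube_sub_add_one_pos (n : ℕ) : (0 : ℝ) < n ^ 3 - n + 1 := by
  have : (n : ℝ) ≤ n ^ 3 := by exact_mod_cast Nat.le_self_pow three_ne_zero n
  linarith

theorem one_sub_avgOrderRatio (n : ℕ) :
    1 - avgOrderRatio n = (n - 1) ^ 2 / (n ^ 3 - n + 1) := by
  rw [avgOrderRatio, one_sub_div (natCast_cube_sub_add_one_pos n).ne']
  ring

theorem avgOrderRatio_nonneg (n : ℕ) : 0 ≤ avgOrderRatio n := by
  have : (0 : ℝ) ≤ n ^ 2 - n + 1 := by nlinarith [sq_nonneg ((n : ℝ) - 1)]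
  exact div_nonneg (by positivity) (natCast_cube_sub_add_one_pos n).le

theorem avgOrderRatio_le_one (n : ℕ) : avgOrderRatio n ≤ 1 := by
  refine sub_nonneg.1 ?_
  rw [one_sub_avgOrderRatio]
  exact div_nonneg (sq_nonneg _) (natCast_cube_sub_add_one_pos n).le

theorem one_sub_inv_le_avgOrderRatio {n : ℕ} (hn : 0 < n) :
    1 - (n : ℝ)⁻¹ ≤ avgOrderRatio n := by
  have hn : (0 : ℝ) < n := by exact_mod_cast hn
  rw [sub_le_comm, one_sub_avgOrderRatio, div_le_iff₀ (natCast_cube_sub_add_one_pos n)]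
  field_simp
  nlinarith

theorem inv_le_four_mul_one_sub_avgOrderRatio {n : ℕ} (hn : 2 ≤ n) :
    (n : ℝ)⁻¹ ≤ 4 * (1 - avgOrderRatio n) := by
  have hn : (2 : ℝ) ≤ n := by exact_mod_cast hn
  rw [one_sub_avgOrderRatio, mul_div_assoc', le_div_iff₀ (natCast_cube_sub_add_one_pos n)]
  field_simp
  nlinarith

theorem tendsto_mulIndicator_avgOrderRatio :
    Tendsto (Set.mulIndicator {p | p.Prime} avgOrderRatio) atTop (𝓝 1) := by
  refine tendsto_of_tendsto_of_tendsto_of_le_of_le' (g := fun n : ℕ => 1 - (n : ℝ)⁻¹) ?_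
    tendsto_const_nhds ((eventually_gt_atTop 0).mono fun n hn => ?_)
    (.of_forall fun n => Set.mulIndicator_apply_le_one fun _ => avgOrderRatio_le_one n)
  · simpa using (tendsto_inv_atTop_nhds_zero_nat (𝕜 := ℝ)).const_sub 1
  · exact Set.le_mulIndicator_apply (fun _ => one_sub_inv_le_avgOrderRatio hn)
      fun _ => sub_le_self 1 (by positivity)

theorem not_summable_one_sub_mulIndicator_avgOrderRatio :
    ¬Summable fun n => 1 - Set.mulIndicator {p | p.Prime} avgOrderRatio n := by
  intro h
  refine not_summable_one_div_on_primes ((h.mul_left 4).of_nonneg_of_le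
    (fun n => Set.indicator_nonneg (fun n _ => by positivity) n) fun n => ?_)
  by_cases hn : n.Prime
  · simpa [hn] using inv_le_four_mul_one_sub_avgOrderRatio hn.two_le
  · simp [hn]

/-- The set of ratios `o(H)/o(G)`, with `G` finite abelian and `H ≤ G`,
is dense in `[0, 1]`. -/
theorem avgOrder_inv_ratio_abelian_dense :
    ∀ a : ℝ, 0 ≤ a → a ≤ 1 → ∀ ε : ℝ, 0 < ε →
      ∃ (G : Type) (_ : CommGroup G), Finite G ∧
        ∃ H : Subgroup G, |avgOrder H / avgOrder G - a| < ε := by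
  intro a ha0 ha1 ε hε
  obtain ⟨S, hS⟩ := exists_finset_abs_prod_sub_lt
    (fun n => Set.le_mulIndicator_apply (fun _ => avgOrderRatio_nonneg n) fun _ => zero_le_one)
    (fun n => Set.mulIndicator_apply_le_one fun _ => avgOrderRatio_le_one n)
    tendsto_mulIndicator_avgOrderRatio not_summable_one_sub_mulIndicator_avgOrderRatio ha0 ha1 hε
  obtain ⟨G, _, _, H, -, hGH⟩ :=
    exists_subgroup_avgOrder_div_eq_prod {p ∈ S | p.Prime} fun p hp => (mem_filter.1 hp).2
  refine ⟨G, _, ‹_›, H, ?_⟩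
  rw [hGH, prod_filter]
  simpa only [Set.mulIndicator_apply, Set.mem_ofPred_eq] using hS
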